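/- arXiv:1609.03119 — 3 statements merged into one kernel-verified Lean document; each statement's English description precedes it below -/
import Mathlib

section
/- Let (X,d) be a metric space. The Wijsman hyperspace (2^X, T_{W(d)}) is metrizable if and only if the metric space (X,d) is separable. -/
/-- The Wijsman hyperspace: nonempty closed subsets of a metric space. -/
def WijsmanHyperspace (X : Type*) [MetricSpace X] : Type _ :=
  {A : Set X // A.Nonempty ∧ IsClosed A}

/-- The Wijsman topology: induced from the product topology on `X → ℝ`
by the map `A ↦ (x ↦ dist from x to A)`. -/
noncomputable instance wijsmanTopology (X : Type*) [MetricSpace X] :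
    TopologicalSpace (WijsmanHyperspace X) :=
  TopologicalSpace.induced (fun A (x : X) => Metric.infDist x A.1) Pi.topologicalSpace

/-!
The distance functionals `x ↦ d(x, A)` are all 1-Lipschitz, and for an equicontinuous family
pointwise convergence on a dense set is pointwise convergence everywhere. So for a countable
dense `D`, `A ↦ (d(x, A))_{x ∈ D}` embeds the Wijsman hyperspace into the metrizable `ℝ^D`.
Conversely, if the hyperspace is first countable at `X`, countably many basic neighbourhoods of `X`
constrain `d(·, A)` only at a countable set `C` of points. The closure of `C` is at distance `0`
from each of them, so it lies in every neighbourhood of `X`; as the hyperspace is T₁, it is `X`.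
-/

open Filter Set Topology TopologicalSpace

section Equicontinuous

variable {T X β : Type*} [TopologicalSpace T] [TopologicalSpace X] [UniformSpace β]

theorem Equicontinuous.continuous_apply_of_dense {g : T → X → β} (hg : Equicontinuous g)
    {D : Set X} (hD : Dense D) (hc : ∀ d ∈ D, Continuous fun t => g t d) (x : X) :
    Continuous fun t => g t x :=
  -- equicontinuity is continuity of `x ↦ (g · x)` for uniform convergence, which preserves
  -- continuity in `t`
  hD.induction hc ((UniformFun.isClosed_setOfPred_continuous (β := β) T).preimage
    (equicontinuous_iff_continuous.1 hg)) x

theorem Equicontinuous.isInducing_restrict {e : T → X → β} (he : IsInducing e)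
    (heq : Equicontinuous e) {D : Set X} (hD : Dense D) :
    IsInducing fun t (d : D) => e t d := by
  set f : T → D → β := fun t d => e t d
  have hf : Continuous f := continuous_pi fun d => (continuous_apply (d : X)).comp he.continuous
  have he' : Continuous[induced f inferInstance, _] e := by
    let _ : TopologicalSpace T := induced f inferInstance
    exact continuous_pi <| heq.continuous_apply_of_dense hD fun d hd =>
      (continuous_apply (⟨d, hd⟩ : D)).comp (continuous_induced_dom (f := f))
  exact ⟨le_antisymm (continuous_iff_le_induced.1 hf)
    (he.eq_induced ▸ continuous_iff_le_induced.1 he')⟩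

end Equicontinuous

section InducedByEvaluations

variable {T X β : Type*} [TopologicalSpace T] [TopologicalSpace β] {e : T → X → β}

theorem Topology.IsInducing.exists_finite_of_mem_nhds (he : IsInducing e) {t₀ : T} {U : Set T}
    (hU : U ∈ 𝓝 t₀) : ∃ I : Set X, I.Finite ∧ ∀ t, EqOn (e t) (e t₀) I → t ∈ U := by
  rw [he.nhds_eq_comap, nhds_pi, mem_comap] at hU
  obtain ⟨V, hV, hVU⟩ := hU
  obtain ⟨I, hI, W, hW, hWV⟩ := mem_pi.1 hV
  refine ⟨I, hI, fun t ht => hVU (hWV fun x hx => ?_)⟩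
  rw [ht hx]
  exact mem_of_mem_nhds (hW x)

theorem Topology.IsInducing.exists_countable_specializes (he : IsInducing e) (t₀ : T)
    [(𝓝 t₀).IsCountablyGenerated] :
    ∃ S : Set X, S.Countable ∧ ∀ t, EqOn (e t) (e t₀) S → t ⤳ t₀ := by
  obtain ⟨s, hs, hgen⟩ := IsCountablyGenerated.out (f := 𝓝 t₀)
  have hfin : ∀ U ∈ s, ∃ I : Set X, I.Finite ∧ ∀ t, EqOn (e t) (e t₀) I → t ∈ U :=
    fun U hU => he.exists_finite_of_mem_nhds (hgen ▸ mem_generate_of_mem hU)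
  choose! I hIfin hI using hfin
  refine ⟨⋃ U ∈ s, I U, hs.biUnion fun U hU => (hIfin U hU).countable, fun t ht => ?_⟩
  rw [specializes_iff_pure, hgen, le_generate_iff]
  exact fun U hU => hI U hU t (ht.mono (subset_biUnion_of_mem hU))

end InducedByEvaluations

namespace WijsmanHyperspace

open Metric

variable {X : Type*} [MetricSpace X]

theorem isInducing_infDist : IsInducing fun (A : WijsmanHyperspace X) x => infDist x A.1 := ⟨rfl⟩

theorem equicontinuous_infDist : Equicontinuous fun (A : WijsmanHyperspace X) x => infDist x A.1 :=
  (LipschitzWith.uniformEquicontinuous (fun (A : WijsmanHyperspace X) x => infDist x A.1) 1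
    fun A => lipschitz_infDist_pt A.1).equicontinuous

theorem infDist_injective : Function.Injective fun (A : WijsmanHyperspace X) x => infDist x A.1 :=
  fun A B h => Subtype.ext <| Set.ext fun x => by
    have hx : infDist x A.1 = infDist x B.1 := congrFun h x
    rw [A.2.2.mem_iff_infDist_zero A.2.1, B.2.2.mem_iff_infDist_zero B.2.1, hx]

theorem metrizableSpace_of_separableSpace [SeparableSpace X] :
    MetrizableSpace (WijsmanHyperspace X) := by
  obtain ⟨D, hDc, hD⟩ := exists_countable_dense X
  have : Countable D := hDc.to_subtype
  have hinj : Function.Injective fun (A : WijsmanHyperspace X) (d : D) => infDist (d : X) A.1 :=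
    fun A B h => infDist_injective <| Continuous.ext_on hD (equicontinuous_infDist.continuous A)
      (equicontinuous_infDist.continuous B) fun x hx => congrFun h ⟨x, hx⟩
  exact (IsEmbedding.mk (equicontinuous_infDist.isInducing_restrict isInducing_infDist hD)
    hinj).metrizableSpace

theorem separableSpace_of_metrizableSpace [MetrizableSpace (WijsmanHyperspace X)] :
    SeparableSpace X := by
  rcases isEmpty_or_nonempty X with _ | ⟨⟨x₀⟩⟩
  · infer_instance
  let univ' : WijsmanHyperspace X := ⟨univ, ⟨x₀, mem_univ x₀⟩, isClosed_univ⟩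
  obtain ⟨S, hSc, hS⟩ := isInducing_infDist.exists_countable_specializes univ'
  have hne : (closure (insert x₀ S)).Nonempty := ⟨x₀, subset_closure (mem_insert x₀ S)⟩
  have hclosure : (⟨_, hne, isClosed_closure⟩ : WijsmanHyperspace X) = univ' :=
    (hS _ fun x hx => by
      change infDist x (closure (insert x₀ S)) = infDist x univ
      rw [infDist_zero_of_mem (subset_closure (mem_insert_of_mem x₀ hx)),
        infDist_zero_of_mem (mem_univ x)]).eq
  exact ⟨⟨_, hSc.insert x₀, dense_iff_closure_eq.2 (congrArg Subtype.val hclosure)⟩⟩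

end WijsmanHyperspace

theorem stmt0 (X : Type*) [MetricSpace X] :
    TopologicalSpace.MetrizableSpace (WijsmanHyperspace X) ↔
      TopologicalSpace.SeparableSpace X :=
  ⟨fun _ => WijsmanHyperspace.separableSpace_of_metrizableSpace,
    fun _ => WijsmanHyperspace.metrizableSpace_of_separableSpace⟩
end

section
/- Let X be a set of cardinality ℵ₁ equipped with the 0–1 metric d (d(x,y) = 1 if x ≠ y and d(x,x) = 0). Then the Wijsman hyperspace (2^X, T_{W(d)}) is not a normal topological space. -/
/-!
For the 0–1 metric, `d(x, A)` is `0` or `1` according as `x ∈ A`, so a basic Wijsman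
neighbourhood of `A` just prescribes membership at finitely many points. Write `X` as a disjoint
union of copies of `ω₁` and `ℕ`; the final segments of either copy form a closed family, and the
two families are disjoint. An open set containing all final segments `[n, ω)` of `ℕ` constrains
only countably many ordinals, so for some `γ < ω₁` it contains `[γ, ω₁) ∪ [n, ω)` for every `n`.
An open set containing `[γ, ω₁)` constrains only finitely many naturals, so it contains
`[γ, ω₁) ∪ [N, ω)` for some `N`. Hence the two closed families cannot be separated.
-/

open Cardinal Function Metric Ordinal Set

universe u

theorem Ordinal.exists_gt_of_countable_Iio_omega_one {s : Set (Iio (ω₁ : Ordinal.{u}))}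
    (hs : s.Countable) : ∃ γ, ∀ i ∈ s, i < γ := by
  have := hs.to_subtype
  refine ⟨⟨⨆ i : s, Order.succ i.1.1,
    iSup_lt_omega_one fun i => (isSuccLimit_omega 1).succ_lt i.1.2⟩, fun i hi => ?_⟩
  exact (Order.lt_succ i.1).trans_le (Ordinal.le_iSup (fun i : s => Order.succ i.1.1) ⟨i, hi⟩)

theorem Cardinal.nonempty_equiv_omega_one_sum_nat {X : Type u} (hcard : #X = ℵ₁) :
    Nonempty (X ≃ Iio (ω₁ : Ordinal.{u}) ⊕ ℕ) := by
  rw [← lift_mk_eq', mk_sum, mk_Iio_ordinal, hcard]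
  simpa using (add_eq_left (aleph0_le_aleph 1) aleph0_lt_aleph_one.le).symm

namespace WijsmanHyperspace

variable {X : Type*} [MetricSpace X]

open scoped Classical in
theorem infDist_eq_ite (h01 : ∀ x y : X, x ≠ y → dist x y = 1) {A : Set X} (hA : A.Nonempty)
    (x : X) : infDist x A = if x ∈ A then 0 else 1 := by
  split_ifs with hx
  · exact infDist_zero_of_mem hx
  obtain ⟨a, ha⟩ := hA
  refine le_antisymm ?_ (not_lt.mp fun hlt => ?_)
  · exact (infDist_le_dist_of_mem ha).trans_eq (h01 x a (ne_of_mem_of_not_mem ha hx).symm)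
  obtain ⟨y, hy, hxy⟩ := (infDist_lt_iff ⟨a, ha⟩).mp hlt
  exact hxy.ne (h01 x y (ne_of_mem_of_not_mem hy hx).symm)

theorem continuous_infDist (x : X) :
    Continuous fun A : WijsmanHyperspace X => infDist x A.1 :=
  have : Continuous fun (A : WijsmanHyperspace X) (y : X) => infDist y A.1 :=
    continuous_induced_dom
  (continuous_apply x).comp this

theorem isOpen_setOf_mem (h01 : ∀ x y : X, x ≠ y → dist x y = 1) (x : X) :
    IsOpen {A : WijsmanHyperspace X | x ∈ A.1} := by
  have : {A : WijsmanHyperspace X | x ∈ A.1} = (fun A => infDist x A.1) ⁻¹' Iio 1 := by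
    ext A
    by_cases hx : x ∈ A.1 <;> simp [infDist_eq_ite h01 A.2.1, hx]
  exact this ▸ isOpen_Iio.preimage (continuous_infDist x)

theorem isOpen_setOf_notMem (x : X) : IsOpen {A : WijsmanHyperspace X | x ∉ A.1} := by
  have : {A : WijsmanHyperspace X | x ∉ A.1} = (fun A => infDist x A.1) ⁻¹' Ioi 0 := by
    ext A
    exact A.2.2.notMem_iff_infDist_pos A.2.1
  exact this ▸ isOpen_Ioi.preimage (continuous_infDist x)

theorem exists_finset_of_mem_isOpen (h01 : ∀ x y : X, x ≠ y → dist x y = 1)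
    {W : Set (WijsmanHyperspace X)} (hW : IsOpen W) {A : WijsmanHyperspace X} (hA : A ∈ W) :
    ∃ F : Finset X, ∀ B : WijsmanHyperspace X, (∀ x ∈ F, x ∈ B.1 ↔ x ∈ A.1) → B ∈ W := by
  obtain ⟨t, ht, rfl⟩ := isOpen_induced_iff.mp hW
  obtain ⟨F, u, hu, hFu⟩ := isOpen_pi_iff.mp ht _ hA
  refine ⟨F, fun B hB => hFu fun x hx => ?_⟩
  have hBA : infDist x B.1 = infDist x A.1 := by
    classical
    rw [infDist_eq_ite h01 B.2.1, infDist_eq_ite h01 A.2.1]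
    exact if_congr (hB x hx) rfl rfl
  simpa [hBA] using (hu x hx).2

def ofSet (h01 : ∀ x y : X, x ≠ y → dist x y = 1) (A : Set X) (hA : A.Nonempty) :
    WijsmanHyperspace X :=
  have : DiscreteTopology X := .of_forall_le_dist one_pos fun x y hxy => (h01 x y hxy).ge
  ⟨A, hA, isClosed_discrete A⟩

variable {ι : Type*}

def tails [Preorder ι] (f : ι → X) : Set (WijsmanHyperspace X) :=
  {C | ∃ i, C.1 = f '' Ici i}

def tail (h01 : ∀ x y : X, x ≠ y → dist x y = 1) [Preorder ι] (f : ι → X) (i : ι) :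
    WijsmanHyperspace X :=
  ofSet h01 (f '' Ici i) (nonempty_Ici.image f)

theorem tail_mem_tails (h01 : ∀ x y : X, x ≠ y → dist x y = 1) [Preorder ι] (f : ι → X) (i : ι) :
    tail h01 f i ∈ tails f :=
  ⟨i, rfl⟩

theorem disjoint_tails [Preorder ι] {f : ι → X} {g : ℕ → X} (hfg : Disjoint (range f) (range g)) :
    Disjoint (tails f) (tails g) := by
  rintro S hSf hSg C hC
  obtain ⟨⟨i, hi⟩, ⟨n, hn⟩⟩ := And.intro (hSf hC) (hSg hC)
  have hfi : f i ∈ g '' Ici n := hn ▸ hi ▸ mem_image_of_mem f self_mem_Ici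
  exact hfg.ne_of_mem (mem_range_self i) (image_subset_range _ _ hfi) rfl

theorem isClosed_tails (h01 : ∀ x y : X, x ≠ y → dist x y = 1) [LinearOrder ι] [WellFoundedLT ι]
    {f : ι → X} (hf : Injective f) : IsClosed (tails f) := by
  refine isOpen_compl_iff.mp (isOpen_iff_forall_mem_open.mpr fun C hC => ?_)
  by_cases hCf : C.1 ⊆ range f
  · obtain ⟨c, hc⟩ := C.2.1
    obtain ⟨a, ha, ha_min⟩ := wellFounded_lt.has_min (f ⁻¹' C.1)
      (by obtain ⟨a, rfl⟩ := hCf hc; exact ⟨a, hc⟩)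
    -- `C ⊆ f '' Ici a` by minimality of `a`, so `C` misses some `f b` with `a ≤ b`
    obtain ⟨b, hab, hb⟩ : ∃ b, a ≤ b ∧ f b ∉ C.1 := by
      by_contra! h
      refine hC ⟨a, subset_antisymm (fun x hx => ?_) (image_subset_iff.mpr h)⟩
      obtain ⟨j, rfl⟩ := hCf hx
      exact mem_image_of_mem f (not_lt.mp (ha_min j hx))
    refine ⟨{B | f a ∈ B.1} ∩ {B | f b ∉ B.1}, ?_,
      (isOpen_setOf_mem h01 _).inter (isOpen_setOf_notMem _), ha, hb⟩
    rintro B ⟨hBa, hBb⟩ ⟨i, hBi⟩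
    replace hBa : a ∈ Ici i := hf.mem_set_image.mp (hBi ▸ hBa)
    exact hBb (hBi ▸ mem_image_of_mem f (le_trans hBa hab))
  · obtain ⟨y, hyC, hyf⟩ := not_subset.mp hCf
    refine ⟨{B | y ∈ B.1}, ?_, isOpen_setOf_mem h01 y, hyC⟩
    rintro B hB ⟨i, hBi⟩
    exact hyf (image_subset_range f _ (show y ∈ f '' Ici i from hBi ▸ hB))

theorem not_separatedNhds_tails (h01 : ∀ x y : X, x ≠ y → dist x y = 1) [Preorder ι]
    (hι : ∀ s : Set ι, s.Countable → ∃ γ, ∀ i ∈ s, i < γ) {f : ι → X} {g : ℕ → X}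
    (hf : Injective f) (hg : Injective g) : ¬ SeparatedNhds (tails f) (tails g) := by
  rintro ⟨U, V, hU, hV, hfU, hgV, hUV⟩
  let mixed (γ : ι) (N : ℕ) : WijsmanHyperspace X :=
    ofSet h01 (f '' Ici γ ∪ g '' Ici N) (nonempty_Ici.image f |>.inl)
  choose F hF using fun n => exists_finset_of_mem_isOpen h01 hV (hgV (tail_mem_tails h01 g n))
  obtain ⟨γ, hγ⟩ := hι (⋃ n, f ⁻¹' F n)
    (countable_iUnion fun n => ((F n).finite_toSet.preimage hf.injOn).countable)
  have hmixed_V (N : ℕ) : mixed γ N ∈ V := by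
    refine hF N _ fun x hx => or_iff_right ?_
    rintro ⟨j, hj, rfl⟩
    exact (hγ j (mem_iUnion_of_mem N hx)).not_ge hj
  obtain ⟨G, hG⟩ := exists_finset_of_mem_isOpen h01 hU (hfU (tail_mem_tails h01 f γ))
  obtain ⟨M, hM⟩ := (G.finite_toSet.preimage hg.injOn).bddAbove
  have hmixed_U : mixed γ (M + 1) ∈ U := by
    refine hG _ fun x hx => or_iff_left ?_
    rintro ⟨m, hm, rfl⟩
    exact (Nat.lt_succ_of_le (hM hx)).not_ge hm
  exact disjoint_left.mp hUV hmixed_U (hmixed_V (M + 1))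

end WijsmanHyperspace

/-- If `X` has cardinality `ℵ₁` and carries the 0–1 metric, then the Wijsman
hyperspace of `X` is not normal. -/
theorem stmt2 (X : Type*) [MetricSpace X]
    (hcard : Cardinal.mk X = Cardinal.aleph 1)
    (h01 : ∀ x y : X, x ≠ y → dist x y = 1) :
    ¬ NormalSpace (WijsmanHyperspace X) := by
  intro hX
  obtain ⟨e⟩ := nonempty_equiv_omega_one_sum_nat hcard
  have hf : Injective (e.symm ∘ Sum.inl) := e.symm.injective.comp Sum.inl_injective
  have hg : Injective (e.symm ∘ Sum.inr) := e.symm.injective.comp Sum.inr_injective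
  have hfg : Disjoint (range (e.symm ∘ Sum.inl)) (range (e.symm ∘ Sum.inr)) := by
    rw [range_comp, range_comp, disjoint_image_iff e.symm.injective]
    exact isCompl_range_inl_range_inr.disjoint
  exact WijsmanHyperspace.not_separatedNhds_tails h01
    (fun _ => Ordinal.exists_gt_of_countable_Iio_omega_one) hf hg <|
    normal_separation (WijsmanHyperspace.isClosed_tails h01 hf)
      (WijsmanHyperspace.isClosed_tails h01 hg) (WijsmanHyperspace.disjoint_tails hfg)
end

section
/- Let (X,d) be a non-separable metric space. Then the subspace 2^X \ {X} of the Wijsman hyperspace (2^X, T_{W(d)}) contains a closed (in 2^X \ {X}) subspace homeomorphic to the product space ω₁ × (ω₁ + 1), where ω₁ is the space of all countable ordinals with the order topology and ω₁ + 1 is the space of all ordinals ≤ ω₁ with the order topology. -/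
/-- The first uncountable ordinal. -/
noncomputable def omega1 : Ordinal.{0} := (Cardinal.aleph 1).ord

open Set Metric Filter Topology

section SeparatedSets

variable {X : Type*} [PseudoMetricSpace X]

lemma exists_maximal_pairwise_le_dist (ε : ℝ) :
    ∃ s : Set X, Maximal (fun s : Set X => s.Pairwise (ε ≤ dist · ·)) s :=
  zorn_subset _ fun c hc hchain =>
    ⟨⋃₀ c, hchain.pairwise_sUnion.2 hc, fun _ => subset_sUnion_of_mem⟩

lemma exists_lt_dist_of_maximal_pairwise_le_dist {ε : ℝ} (hε : 0 < ε) {s : Set X}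
    (hs : Maximal (fun s : Set X => s.Pairwise (ε ≤ dist · ·)) s) (x : X) :
    ∃ y ∈ s, dist x y < ε := by
  by_contra! hfar
  have hins : (insert x s).Pairwise (ε ≤ dist · ·) :=
    hs.prop.insert fun y hy _ => ⟨hfar y hy, dist_comm x y ▸ hfar y hy⟩
  simpa using (hfar x (hs.mem_of_prop_insert hins)).trans_lt' hε

lemma exists_uncountable_pairwise_le_dist_of_not_separableSpace
    (h : ¬ TopologicalSpace.SeparableSpace X) :
    ∃ ε > 0, ∃ s : Set X, s.Pairwise (ε ≤ dist · ·) ∧ ¬ s.Countable := by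
  by_contra! hcount
  refine h (@TopologicalSpace.SecondCountableTopology.to_separableSpace _ _
    (secondCountable_of_almost_dense_set fun ε hε => ?_))
  obtain ⟨s, hs⟩ := exists_maximal_pairwise_le_dist (X := X) ε
  refine ⟨s, hcount ε hε s hs.prop, fun x => ?_⟩
  obtain ⟨y, hy, hxy⟩ := exists_lt_dist_of_maximal_pairwise_le_dist hε hs x
  exact ⟨y, hy, hxy.le⟩

end SeparatedSets

section Cardinality

open Cardinal

lemma exists_injective_mem_of_mk_le_aleph_one {α X : Type*} {s : Set X}
    (hα : #α ≤ ℵ₁) (hs : ¬ s.Countable) : ∃ j : α → X, Function.Injective j ∧ ∀ a, j a ∈ s := by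
  have hs' : ℵ₀ < #s := lt_of_not_ge (mt le_aleph0_iff_set_countable.1 hs)
  obtain ⟨j⟩ := lift_mk_le'.1
    ((lift_le_aleph_one.2 hα).trans (aleph_one_le_iff.2 (aleph0_lt_lift.2 hs')))
  exact ⟨fun a => j a, Subtype.val_injective.comp j.injective, fun a => (j a).2⟩

lemma mk_Iic_omega1 : #(Iic omega1) = ℵ₁ := by
  rw [← Order.Iio_succ, mk_Iio_ordinal, Order.succ_eq_add_one, Ordinal.card_add_one, omega1,
    card_ord, add_one_of_aleph0_le (aleph0_le_aleph 1), lift_aleph, Ordinal.lift_one]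

lemma mk_Iic_omega1_prod : #(Iic omega1 × Iic omega1) = ℵ₁ := by
  rw [mk_prod, lift_id, mk_Iic_omega1, mul_eq_self (aleph0_le_aleph 1)]

end Cardinality

section ComplBalls

variable {ι X : Type*} [PseudoMetricSpace X]

def complBalls (x : ι → X) (r : ℝ) (S : Set ι) : Set X := (⋃ i ∈ S, ball (x i) r)ᶜ

variable {x : ι → X} {r : ℝ} {S T : Set ι}

lemma isClosed_complBalls : IsClosed (complBalls x r S) :=
  (isOpen_biUnion fun _ _ => isOpen_ball).isClosed_compl

lemma complBalls_anti (h : S ⊆ T) : complBalls x r T ⊆ complBalls x r S :=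
  compl_subset_compl.2 (biUnion_subset_biUnion_left h)

@[simp]
lemma complBalls_empty : complBalls x r ∅ = univ := by simp [complBalls]

lemma mem_complBalls_iff_of_mem_ball (hsep : Pairwise fun i j => 2 * r ≤ dist (x i) (x j))
    {y : X} {i : ι} (hy : y ∈ ball (x i) r) : y ∈ complBalls x r S ↔ i ∉ S := by
  have hunique : ∀ j, y ∈ ball (x j) r → j = i := fun j hj => by
    by_contra hji
    have := dist_triangle_left (x j) (x i) y
    linarith [hsep hji, mem_ball.1 hj, mem_ball.1 hy]
  simp only [complBalls, mem_compl_iff, mem_iUnion₂]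
  exact ⟨fun h hi => h ⟨i, hi, hy⟩, fun h ⟨j, hj, hyj⟩ => h (hunique j hyj ▸ hj)⟩

lemma apply_mem_complBalls_iff (hsep : Pairwise fun i j => 2 * r ≤ dist (x i) (x j))
    (hr : 0 < r) {i : ι} : x i ∈ complBalls x r S ↔ i ∉ S :=
  mem_complBalls_iff_of_mem_ball hsep (mem_ball_self hr)

lemma complBalls_injective (hsep : Pairwise fun i j => 2 * r ≤ dist (x i) (x j))
    (hr : 0 < r) : Function.Injective (complBalls x r) := fun S T h => by
  ext i
  simpa only [apply_mem_complBalls_iff hsep hr, not_iff_not] using Set.ext_iff.1 h (x i)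

lemma isOpen_setOf_mem_complBalls {Q : Type*} [TopologicalSpace Q]
    (hsep : Pairwise fun i j => 2 * r ≤ dist (x i) (x j)) {S : Q → Set ι}
    (hS : ∀ i, IsClosed {q | i ∈ S q}) (y : X) : IsOpen {q | y ∈ complBalls x r (S q)} := by
  by_cases hy : ∃ i, y ∈ ball (x i) r
  · obtain ⟨i, hi⟩ := hy
    simp only [mem_complBalls_iff_of_mem_ball hsep hi]
    exact (hS i).isOpen_compl
  · have hall : ∀ q, y ∈ complBalls x r (S q) := fun q =>
      by simpa [complBalls] using fun i _ h => hy ⟨i, h⟩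
    simp only [hall, ofPred_true, isOpen_univ]

lemma continuous_infDist_complBalls {Q : Type*} [TopologicalSpace Q]
    (hsep : Pairwise fun i j => 2 * r ≤ dist (x i) (x j)) {S : Q → Set ι}
    (hS : ∀ i, IsClosed {q | i ∈ S q}) (hloc : ∀ q₀, ∀ᶠ q in 𝓝 q₀, S q₀ ⊆ S q)
    (hne : ∀ q, (complBalls x r (S q)).Nonempty) (p : X) :
    Continuous fun q => infDist p (complBalls x r (S q)) := by
  refine continuous_iff_continuousAt.2 fun q₀ => tendsto_order.2 ⟨fun a ha => ?_, fun a ha => ?_⟩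
  · filter_upwards [hloc q₀] with q hq
    exact ha.trans_le (infDist_le_infDist_of_subset (complBalls_anti hq) (hne q))
  · obtain ⟨y, hy, hpy⟩ := (infDist_lt_iff (hne q₀)).1 ha
    filter_upwards [(isOpen_setOf_mem_complBalls hsep hS y).mem_nhds hy] with q hq
    exact (infDist_le_dist_of_mem hq).trans_lt hpy

end ComplBalls

section Wijsman

variable {X : Type*} [MetricSpace X]

instance : T2Space (WijsmanHyperspace X) := by
  refine IsEmbedding.t2Space (f := fun (A : WijsmanHyperspace X) (x : X) => infDist x A.1)
    ⟨⟨rfl⟩, fun A B h => Subtype.ext (Set.ext fun x => ?_)⟩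
  rw [A.2.2.mem_iff_infDist_zero A.2.1, B.2.2.mem_iff_infDist_zero B.2.1]
  exact Iff.of_eq (congrArg (· = 0) (congrFun h x))

lemma continuous_wijsmanHyperspace_iff {Q : Type*} [TopologicalSpace Q]
    {F : Q → WijsmanHyperspace X} : Continuous F ↔ ∀ p, Continuous fun q => infDist p (F q).1 :=
  continuous_induced_rng.trans continuous_pi_iff

end Wijsman

lemma isClosedEmbedding_of_compactSpace_of_injOn {P Q Y : Type*} [TopologicalSpace P]
    [TopologicalSpace Q] [TopologicalSpace Y] [CompactSpace Q] [T2Space Y] {F : Q → Y}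
    (hF : Continuous F) {U : Set Y} (hinj : InjOn F (F ⁻¹' U)) {e : P → Q} (he : IsEmbedding e)
    (hmaps : ∀ p, F (e p) ∈ U) (hsurj : F ⁻¹' U ⊆ range e) :
    IsClosedEmbedding fun p => (⟨F (e p), hmaps p⟩ : U) := by
  have hrestrict : IsClosedEmbedding (U.restrictPreimage F) :=
    .of_continuous_injective_isClosedMap hF.restrictPreimage
      (fun a b h => Subtype.ext (hinj a.2 b.2 (congrArg Subtype.val h)))
      (hF.isClosedMap.restrictPreimage U)
  have hcod : IsClosedEmbedding (codRestrict e (F ⁻¹' U) hmaps) := by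
    refine ⟨he.codRestrict _ _, ?_⟩
    rw [Function.Surjective.range_eq fun q => ?_]
    · exact isClosed_univ
    obtain ⟨p, hp⟩ := hsurj q.2
    exact ⟨p, Subtype.ext hp⟩
  exact hrestrict.comp hcod

lemma Iic_mem_nhds_subtype {α : Type*} [LinearOrder α] [TopologicalSpace α] [OrderTopology α]
    [SuccOrder α] [NoMaxOrder α] {s : Set α} (a : s) : Iic a ∈ 𝓝 a :=
  mem_of_superset ((isOpen_Iio.preimage continuous_subtype_val).mem_nhds (Order.lt_succ a.1))
    fun _ hb => Order.lt_succ_iff.1 hb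

lemma eq_of_preimage_Ici_eq {ι Q : Type*} [PartialOrder Q] {e : ι → Q} {q q' : Q}
    (hq : q ∈ range e) (hq' : q' ∈ range e) (h : e ⁻¹' Ici q = e ⁻¹' Ici q') : q = q' := by
  obtain ⟨c, rfl⟩ := hq
  obtain ⟨c', rfl⟩ := hq'
  exact le_antisymm (show c' ∈ e ⁻¹' Ici (e c) from h ▸ le_rfl)
    (show c ∈ e ⁻¹' Ici (e c') from h ▸ le_rfl)

section Omega1

instance : CompactSpace (Iic omega1) :=
  isCompact_iff_compactSpace.1 (Icc_bot (a := omega1) ▸ isCompact_Icc)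

def toIicProd : Iio omega1 × Iic omega1 → Iic omega1 × Iic omega1 :=
  Prod.map (inclusion Iio_subset_Iic_self) id

lemma isEmbedding_toIicProd : IsEmbedding toIicProd :=
  (IsEmbedding.inclusion _).prodMap .id

lemma preimage_toIicProd_Ici_nonempty_iff {q : Iic omega1 × Iic omega1} :
    (toIicProd ⁻¹' Ici q).Nonempty ↔ q ∈ range toIicProd := by
  constructor
  · rintro ⟨c, hc⟩
    exact ⟨(⟨q.1, (show q.1.1 ≤ c.1.1 from hc.1).trans_lt c.1.2⟩, q.2), rfl⟩
  · rintro ⟨c, rfl⟩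
    exact ⟨c, le_refl (toIicProd c)⟩

end Omega1

theorem exists_isClosedEmbedding_wijsmanHyperspace_of_separated {X : Type*} [MetricSpace X]
    {j : Iic omega1 × Iic omega1 → X} {r : ℝ} (hr : 0 < r)
    (hsep : Pairwise fun a b => 2 * r ≤ dist (j a) (j b)) :
    ∃ f : Iio omega1 × Iic omega1 → {A : WijsmanHyperspace X // A.1 ≠ univ},
      IsClosedEmbedding f := by
  set x := j ∘ toIicProd
  have hsepx : Pairwise fun c c' => 2 * r ≤ dist (x c) (x c') :=
    fun c c' h => hsep (isEmbedding_toIicProd.injective.ne h)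
  set S : Iic omega1 × Iic omega1 → Set (Iio omega1 × Iic omega1) := fun q => toIicProd ⁻¹' Ici q
  have hne : ∀ q, (complBalls x r (S q)).Nonempty := fun q => by
    let top : Iic omega1 × Iic omega1 := (⟨omega1, self_mem_Iic⟩, ⟨omega1, self_mem_Iic⟩)
    refine ⟨j top, ?_⟩
    simp only [complBalls, mem_compl_iff, mem_iUnion₂, not_exists, mem_ball, not_lt]
    intro c _
    have htop : top ≠ toIicProd c := fun h =>
      (c.1.2 : c.1.1 < omega1).ne (congrArg (·.1.1) h).symm
    exact (by linarith [hsep htop] : r ≤ dist (j top) (j (toIicProd c)))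
  let F : Iic omega1 × Iic omega1 → WijsmanHyperspace X :=
    fun q => ⟨complBalls x r (S q), hne q, isClosed_complBalls⟩
  have hF : Continuous F := by
    refine continuous_wijsmanHyperspace_iff.2
      (continuous_infDist_complBalls hsepx (fun c => isClosed_Iic) (fun q₀ => ?_) hne)
    filter_upwards [Iic_prod_eq q₀ ▸ prod_mem_nhds (Iic_mem_nhds_subtype q₀.1)
      (Iic_mem_nhds_subtype q₀.2)] with q (hq : q ≤ q₀)
    exact fun c (hc : q₀ ≤ toIicProd c) => (hq.trans hc : q ≤ toIicProd c)
  have hU : ∀ q, complBalls x r (S q) ≠ univ ↔ q ∈ range toIicProd := fun q => by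
    rw [← preimage_toIicProd_Ici_nonempty_iff, nonempty_iff_ne_empty,
      ← complBalls_empty (x := x) (r := r)]
    exact (complBalls_injective hsepx hr).ne_iff
  exact ⟨_, isClosedEmbedding_of_compactSpace_of_injOn (U := {A | A.1 ≠ univ}) hF
    (fun q hq q' hq' h => eq_of_preimage_Ici_eq ((hU q).1 hq) ((hU q').1 hq')
      (complBalls_injective hsepx hr (congrArg Subtype.val h)))
    isEmbedding_toIicProd (fun c => (hU _).2 ⟨c, rfl⟩) fun q hq => (hU q).1 hq⟩

/-- Cao–Junnila: if `(X,d)` is a non-separable metric space, then the subspace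
`2^X \ {X}` of the Wijsman hyperspace contains a closed copy of
`ω₁ × (ω₁ + 1)`.  Here `ω₁` is modelled as the set of ordinals `< ω₁` and
`ω₁ + 1` as the set of ordinals `≤ ω₁` (their subspace topologies coincide with
the respective order topologies). -/
theorem stmt7 (X : Type*) [MetricSpace X]
    (h : ¬ TopologicalSpace.SeparableSpace X) :
    ∃ f : ↥(Set.Iio omega1) × ↥(Set.Iic omega1) →
        {A : WijsmanHyperspace X // A.1 ≠ Set.univ},
      Topology.IsClosedEmbedding f := by
  obtain ⟨ε, hε, s, hs, hs_unc⟩ := exists_uncountable_pairwise_le_dist_of_not_separableSpace h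
  obtain ⟨j, hj, hjs⟩ := exists_injective_mem_of_mk_le_aleph_one mk_Iic_omega1_prod.le hs_unc
  refine exists_isClosedEmbedding_wijsmanHyperspace_of_separated (j := j) (half_pos hε)
    fun a b hab => ?_
  simpa [mul_div_cancel₀] using hs (hjs a) (hjs b) (hj.ne hab)
end
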